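/- Let X_1, X_2, ... be i.i.d. complex random variables with distribution μ, and let z ∈ ℂ satisfy ∫_ℂ log_-|y - z| dμ(y) < ∞. Define L_n(z) = Σ_{k=1}^n 1/(z - X_k). Then almost surely limsup_{n→∞} (1/n) log|L_n(z)| ≤ 0. -/

import Mathlib

/-!
By the first Borel–Cantelli lemma, `∑ₖ P(log_-|X_k - z| > ε k) = ∑ₖ μ(log_-|y - z| > ε k) < ∞`
for every `ε > 0`, since the integral of `log_-|y - z|` is finite. Hence almost surely
`|1/(z - X_k)| ≤ exp (ε k)` for all large `k`, and this subexponential growth of the terms passes to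
the partial sums `L_n(z)`.
-/

open MeasureTheory Filter

/-- `log_- t`: equals `|log t|` for `0 < t ≤ 1`, `0` for `t ≥ 1`, and `+∞` at `t = 0`. -/
noncomputable def logMinus (t : ℝ) : ENNReal :=
  if t = 0 then ⊤ else ENNReal.ofReal (max (-Real.log t) 0)

open Real
open scoped ENNReal

lemma measurable_logMinus : Measurable logMinus := by
  unfold logMinus
  exact Measurable.ite measurableSet_eq measurable_const
    (ENNReal.measurable_ofReal.comp ((measurable_log.neg).max measurable_const))

lemma inv_le_exp_of_logMinus_le {r t : ℝ} (hr : 0 ≤ r) (ht : 0 ≤ t)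
    (h : logMinus r ≤ ENNReal.ofReal t) : r⁻¹ ≤ exp t := by
  have hr0 : r ≠ 0 := by rintro rfl; simp [logMinus] at h
  rw [logMinus, if_neg hr0, ENNReal.ofReal_le_ofReal_iff ht, max_le_iff, ← log_inv] at h
  exact (log_le_iff_le_exp (inv_pos.2 (hr.lt_of_ne' hr0))).1 h.1

lemma limsup_nonpos_of_forall_pos {β : Type*} {l : Filter β} {u : β → ℝ}
    (h : ∀ ε > 0, ∀ᶠ x in l, u x ≤ ε) : limsup u l ≤ 0 := by
  by_cases hc : l.IsCoboundedUnder (· ≤ ·) u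
  · exact le_of_forall_pos_le_add fun ε hε => by simpa using limsup_le_of_le hc (h ε hε)
  -- Otherwise the limsup in `ℝ` takes the junk value `0`.
  · rw [Real.limsup_of_not_isCoboundedUnder hc]

lemma limsup_inv_mul_log_norm_nonpos {E : Type*} [SeminormedAddGroup E] {u : ℕ → E}
    (h : ∀ ε > 0, ∀ᶠ n in atTop, ‖u n‖ ≤ exp (ε * n)) :
    limsup (fun n : ℕ => (1 / n : ℝ) * log ‖u n‖) atTop ≤ 0 := by
  refine limsup_nonpos_of_forall_pos fun ε hε => ?_
  filter_upwards [h ε hε, eventually_gt_atTop 0] with n hn hn0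
  have hlog : log ‖u n‖ ≤ ε * n := by
    rcases (norm_nonneg (u n)).eq_or_lt with h0 | h0
    · rw [← h0, log_zero]; positivity
    · exact (log_le_iff_le_exp h0).2 hn
  rw [one_div, inv_mul_le_iff₀ (by positivity)]
  linarith

lemma eventually_mul_le_exp_mul {c δ : ℝ} (hδ : 0 < δ) :
    ∀ᶠ n : ℕ in atTop, c * n ≤ exp (δ * n) := by
  have := ((isLittleO_pow_exp_pos_mul_atTop 1 hδ).const_mul_left c).comp_tendsto
    tendsto_natCast_atTop_atTop
  filter_upwards [this.bound one_pos] with n hn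
  simpa [abs_of_pos (exp_pos _)] using (le_abs_self _).trans hn

lemma eventually_norm_sum_range_le_exp {E : Type*} [SeminormedAddCommGroup E] {v : ℕ → E}
    (hv : ∀ ε > 0, ∀ᶠ k in atTop, ‖v k‖ ≤ exp (ε * k)) {ε : ℝ} (hε : 0 < ε) :
    ∀ᶠ n in atTop, ‖∑ k ∈ Finset.range n, v k‖ ≤ exp (ε * n) := by
  obtain ⟨K, hK⟩ := eventually_atTop.1 (hv (ε / 2) (half_pos hε))
  set C := ∑ k ∈ Finset.range K, ‖v k‖
  have hC : 0 ≤ C := Finset.sum_nonneg fun k _ => norm_nonneg (v k)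
  filter_upwards [eventually_mul_le_exp_mul (c := C + 1) (half_pos hε)] with n hn
  have hexp : 1 ≤ exp (ε / 2 * n) := one_le_exp (by positivity)
  have hterm : ∀ k ∈ Finset.range n, ‖v k‖ ≤ (C + 1) * exp (ε / 2 * n) := by
    intro k hk
    rcases lt_or_ge k K with hkK | hkK
    · have : ‖v k‖ ≤ C := Finset.single_le_sum (fun i _ => norm_nonneg (v i))
        (Finset.mem_range.2 hkK)
      nlinarith
    · have hkn : (k : ℝ) ≤ n := by exact_mod_cast (Finset.mem_range.1 hk).le
      have : ‖v k‖ ≤ exp (ε / 2 * n) :=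
        (hK k hkK).trans (exp_le_exp.2 (by gcongr))
      nlinarith
  calc ‖∑ k ∈ Finset.range n, v k‖
      ≤ ∑ k ∈ Finset.range n, ‖v k‖ := norm_sum_le _ _
    _ ≤ n * ((C + 1) * exp (ε / 2 * n)) := by
        simpa using Finset.sum_le_card_nsmul _ _ _ hterm
    _ = (C + 1) * n * exp (ε / 2 * n) := by ring
    _ ≤ exp (ε / 2 * n) * exp (ε / 2 * n) := by gcongr
    _ = exp (ε * n) := by rw [← exp_add]; ring_nf

lemma tsum_measure_ofReal_mul_lt_ne_top {α : Type*} [MeasurableSpace α] {μ : Measure α}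
    [IsProbabilityMeasure μ] {g : α → ℝ≥0∞} (hg : Measurable g) (hgi : ∫⁻ a, g a ∂μ ≠ ∞)
    {ε : ℝ} (hε : 0 < ε) :
    ∑' k : ℕ, μ {a | ENNReal.ofReal (ε * k) < g a} ≠ ∞ := by
  -- `tsum_prob_mem_Ioi_lt_top` is stated for the volume of a `MeasureSpace`.
  let _ : MeasureSpace α := ⟨μ⟩
  have hY : Integrable (fun a => (g a).toReal / ε) μ :=
    (integrable_toReal_of_lintegral_ne_top hg.aemeasurable hgi).div_const ε
  refine ne_top_of_le_ne_top (ProbabilityTheory.tsum_prob_mem_Ioi_lt_top hY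
    fun a => div_nonneg ENNReal.toReal_nonneg hε.le).ne (ENNReal.tsum_le_tsum fun k => ?_)
  refine measure_mono_ae ?_
  filter_upwards [ae_lt_top hg hgi] with a ha hk
  change ENNReal.ofReal (ε * k) < g a at hk
  rw [ENNReal.ofReal_lt_iff_lt_toReal (by positivity) ha.ne] at hk
  exact (lt_div_iff₀ hε).2 (by linarith)

lemma ae_eventually_le_ofReal_mul {Ω α : Type*} [MeasurableSpace Ω] [MeasurableSpace α]
    {P : Measure Ω} {μ : Measure α} [IsProbabilityMeasure μ] {X : ℕ → Ω → α}
    (hX : ∀ k, Measurable (X k)) (hlaw : ∀ k, P.map (X k) = μ) {g : α → ℝ≥0∞}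
    (hg : Measurable g) (hgi : ∫⁻ a, g a ∂μ ≠ ∞) {ε : ℝ} (hε : 0 < ε) :
    ∀ᵐ ω ∂P, ∀ᶠ k in atTop, g (X k ω) ≤ ENNReal.ofReal (ε * k) := by
  have hlaw_set : ∀ k : ℕ, P {ω | ENNReal.ofReal (ε * k) < g (X k ω)}
      = μ {a | ENNReal.ofReal (ε * k) < g a} := fun k => by
    rw [← hlaw k, Measure.map_apply (hX k) (measurableSet_lt measurable_const hg)]
    rfl
  filter_upwards [ae_eventually_notMem (s := fun k => {ω | ENNReal.ofReal (ε * k) < g (X k ω)})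
    (by simpa only [hlaw_set] using tsum_measure_ofReal_mul_lt_ne_top hg hgi hε)] with ω hω
  filter_upwards [hω] with k hk
  exact not_lt.1 hk

lemma ae_forall_pos_eventually_le_ofReal_mul {Ω α : Type*} [MeasurableSpace Ω]
    [MeasurableSpace α] {P : Measure Ω} {μ : Measure α} [IsProbabilityMeasure μ]
    {X : ℕ → Ω → α} (hX : ∀ k, Measurable (X k)) (hlaw : ∀ k, P.map (X k) = μ)
    {g : α → ℝ≥0∞} (hg : Measurable g) (hgi : ∫⁻ a, g a ∂μ ≠ ∞) :
    ∀ᵐ ω ∂P, ∀ ε > 0, ∀ᶠ k in atTop, g (X k ω) ≤ ENNReal.ofReal (ε * k) := by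
  have h := ae_all_iff.2 fun m : ℕ =>
    ae_eventually_le_ofReal_mul hX hlaw hg hgi (Nat.one_div_pos_of_nat (n := m))
  filter_upwards [h] with ω hω ε hε
  obtain ⟨m, hm⟩ := exists_nat_one_div_lt hε
  filter_upwards [hω m] with k hk
  exact hk.trans (ENNReal.ofReal_le_ofReal (by gcongr))

theorem limsup_log_Ln_le_zero_general {Ω : Type*} [MeasurableSpace Ω] (P : Measure Ω)
    (μ : Measure ℂ) [IsProbabilityMeasure μ] (X : ℕ → Ω → ℂ)
    (hmeas : ∀ n, Measurable (X n))
    (hdist : ∀ n, Measure.map (X n) P = μ)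
    (z : ℂ) (hz : ∫⁻ y, logMinus ‖y - z‖ ∂μ < ⊤) :
    ∀ᵐ ω ∂P, Filter.limsup
      (fun n : ℕ => (1 / n : ℝ) * Real.log ‖∑ k ∈ Finset.range n, (z - X k ω)⁻¹‖)
      atTop ≤ 0 := by
  have hg : Measurable fun y => logMinus ‖y - z‖ := measurable_logMinus.comp (by fun_prop)
  filter_upwards [ae_forall_pos_eventually_le_ofReal_mul hmeas hdist hg hz.ne] with ω hω
  refine limsup_inv_mul_log_norm_nonpos fun ε hε => eventually_norm_sum_range_le_exp
    (fun δ hδ => ?_) hε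
  filter_upwards [hω δ hδ] with k hk
  rw [norm_inv, norm_sub_rev]
  exact inv_le_exp_of_logMinus_le (norm_nonneg _) (by positivity) hk

/-- If `X_1, X_2, …` are i.i.d. with law `μ` and `∫ log_-|y - z| dμ(y) < ∞`, then almost surely
`limsup (1/n) log |L_n(z)| ≤ 0`, where `L_n(z) = Σ_{k=1}^n 1/(z - X_k)`. -/
theorem limsup_log_Ln_le_zero {Ω : Type*} [MeasurableSpace Ω] (P : Measure Ω)
    [IsProbabilityMeasure P] (μ : Measure ℂ) [IsProbabilityMeasure μ] (X : ℕ → Ω → ℂ)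
    (hmeas : ∀ n, Measurable (X n))
    (hind : ProbabilityTheory.iIndepFun X P)
    (hdist : ∀ n, Measure.map (X n) P = μ)
    (z : ℂ) (hz : ∫⁻ y, logMinus ‖y - z‖ ∂μ < ⊤) :
    ∀ᵐ ω ∂P, Filter.limsup
      (fun n : ℕ => (1 / n : ℝ) * Real.log ‖∑ k ∈ Finset.range n, (z - X k ω)⁻¹‖)
      atTop ≤ 0 :=
  limsup_log_Ln_le_zero_general P μ X hmeas hdist z hz
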